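/- There exists c > 0 such that for any cube Q_r = x* + (−r/2, r/2)³ ⊂ ℝ³, any measurable subset ω ⊆ Q_r with ℒ³(ω) ≤ r³/4, and any z ∈ ℝ³, one has r² |z|² ≤ (c / r³) · min over q ∈ ℝ of ∫_{Q_r \ ω} |z·x − q|² dx. -/

import Mathlib

/-!
Pick a coordinate `i` with `z i ^ 2 ≥ |z|² / n`. Shearing `x i` into `z ⬝ᵥ x`, a linear map of
determinant `z i`, shows that the slab `{x ∈ Q_r : |z ⬝ᵥ x - q| < r |z i| / 4}` has volume at
most `rⁿ / 2`. As `ω` takes at most `rⁿ / 4`, the set of `x ∈ Q_r \ ω` with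
`(z ⬝ᵥ x - q) ^ 2 ≥ r ^ 2 z i ^ 2 / 16` has volume at least `rⁿ / 4`, and Chebyshev's inequality
gives the bound with `c = 64 n`.
-/

open MeasureTheory Set

namespace Matrix

variable {ι : Type*} [Fintype ι] [DecidableEq ι]

theorem det_updateRow_one (z : ι → ℝ) (i : ι) :
    (updateRow (1 : Matrix ι ι ℝ) i z).det = z i := by
  have hz : ∑ k, z k • (1 : Matrix ι ι ℝ) k = z := by
    ext j
    simp [Finset.sum_apply, one_apply]
  simpa [hz] using det_updateRow_sum (1 : Matrix ι ι ℝ) i z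

theorem toLin'_updateRow_one_apply_self (z x : ι → ℝ) (i : ι) :
    toLin' (updateRow (1 : Matrix ι ι ℝ) i z) x i = z ⬝ᵥ x := by
  simp [mulVec]

theorem toLin'_updateRow_one_apply_of_ne (z x : ι → ℝ) {i k : ι} (hk : k ≠ i) :
    toLin' (updateRow (1 : Matrix ι ι ℝ) i z) x k = x k := by
  simp [mulVec, hk, dotProduct, one_apply]

end Matrix

section

open Finset Matrix

variable {ι : Type*}

theorem volume_pi_inter_abs_dotProduct_sub_lt_le [Fintype ι] [DecidableEq ι] (I : ι → Set ℝ)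
    {z : ι → ℝ} {i : ι} (hz : z i ≠ 0) (q t : ℝ) :
    volume (pi univ I ∩ {x | |z ⬝ᵥ x - q| < t}) ≤
      ENNReal.ofReal (2 * t / |z i|) * ∏ k ∈ univ.erase i, volume (I k) := by
  set L := toLin' (updateRow (1 : Matrix ι ι ℝ) i z)
  have hL : LinearMap.det L = z i := by rw [LinearMap.det_toLin', det_updateRow_one]
  have hsub : pi univ I ∩ {x | |z ⬝ᵥ x - q| < t} ⊆
      L ⁻¹' pi univ (Function.update I i (Ioo (q - t) (q + t))) := by
    rintro x ⟨hxI, hx⟩ k -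
    rcases eq_or_ne k i with rfl | hk
    · rw [Function.update_self, toLin'_updateRow_one_apply_self]
      exact ⟨by linarith [neg_abs_le (z ⬝ᵥ x - q), hx.out],
        by linarith [le_abs_self (z ⬝ᵥ x - q), hx.out]⟩
    · rw [Function.update_of_ne hk, toLin'_updateRow_one_apply_of_ne z x hk]
      exact hxI k (mem_univ k)
  calc volume (pi univ I ∩ {x | |z ⬝ᵥ x - q| < t})
      ≤ volume (L ⁻¹' pi univ (Function.update I i (Ioo (q - t) (q + t)))) := measure_mono hsub
    _ = ENNReal.ofReal |(z i)⁻¹| *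
          (ENNReal.ofReal (2 * t) * ∏ k ∈ univ.erase i, volume (I k)) := by
      rw [Measure.addHaar_preimage_linearMap _ (hL ▸ hz), hL, volume_pi_pi,
        ← mul_prod_erase univ _ (mem_univ i), Function.update_self, Real.volume_Ioo]
      congr 2
      · ring_nf
      · exact prod_congr rfl fun k hk => by rw [Function.update_of_ne (ne_of_mem_erase hk)]
    _ = ENNReal.ofReal (2 * t / |z i|) * ∏ k ∈ univ.erase i, volume (I k) := by
      rw [← mul_assoc, ← ENNReal.ofReal_mul (abs_nonneg _), abs_inv, inv_mul_eq_div]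

theorem exists_sum_sq_le_card_mul_sq [Fintype ι] [Nonempty ι] (z : ι → ℝ) :
    ∃ i, ∑ k, z k ^ 2 ≤ Fintype.card ι * z i ^ 2 := by
  obtain ⟨i, -, hi⟩ := exists_max_image univ (fun k => z k ^ 2) univ_nonempty
  exact ⟨i, by simpa using sum_le_card_nsmul univ _ _ fun k _ => hi k (mem_univ k)⟩

theorem mul_measureReal_inter_le_setIntegral_sq {α : Type*} [MeasurableSpace α] {μ : Measure α}
    {g : α → ℝ} (hg : Measurable g) {s : Set α} (hint : IntegrableOn (fun x => g x ^ 2) s μ)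
    {t : ℝ} (ht : 0 ≤ t) : t ^ 2 * μ.real (s ∩ {x | t ≤ |g x|}) ≤ ∫ x in s, g x ^ 2 ∂μ := by
  have hset : {x | t ^ 2 ≤ g x ^ 2} = {x | t ≤ |g x|} := by
    ext x
    simp only [mem_ofPred_eq, sq_le_sq, abs_of_nonneg ht]
  have hmeas : MeasurableSet {x | t ≤ |g x|} := measurableSet_le measurable_const hg.abs
  have := mul_meas_ge_le_integral_of_nonneg (ae_of_all _ fun x => sq_nonneg (g x)) hint (t ^ 2)
  rwa [hset, measureReal_restrict_apply hmeas, inter_comm] at this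

def cube (c : ι → ℝ) (r : ℝ) : Set (ι → ℝ) := {x | ∀ i, x i ∈ Ioo (c i - r / 2) (c i + r / 2)}

variable {c : ι → ℝ} {r : ℝ}

theorem cube_eq_pi : cube c r = pi univ fun i => Ioo (c i - r / 2) (c i + r / 2) := by
  ext x
  simp [cube]

theorem volume_cube [Fintype ι] (hr : 0 ≤ r) :
    volume (cube c r) = ENNReal.ofReal (r ^ Fintype.card ι) := by
  simp [cube_eq_pi, Real.volume_pi_Ioo, ENNReal.ofReal_pow hr]

theorem Continuous.integrableOn_cube [Fintype ι] {f : (ι → ℝ) → ℝ} (hf : Continuous f) :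
    IntegrableOn f (cube c r) := by
  have hK : IsCompact (pi univ fun i => Icc (c i - r / 2) (c i + r / 2)) :=
    isCompact_univ_pi fun i => isCompact_Icc
  refine (hf.continuousOn.integrableOn_compact hK).mono_set ?_
  rw [cube_eq_pi]
  exact pi_mono fun i _ => Ioo_subset_Icc_self

theorem volume_cube_inter_abs_dotProduct_sub_lt_le [Fintype ι] [DecidableEq ι] (hr : 0 ≤ r)
    {z : ι → ℝ} {i : ι} (hz : z i ≠ 0) (q : ℝ) :
    volume (cube c r ∩ {x | |z ⬝ᵥ x - q| < r * |z i| / 4}) ≤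
      ENNReal.ofReal (r ^ Fintype.card ι / 2) := by
  have : Nonempty ι := ⟨i⟩
  obtain ⟨n, hn⟩ := Nat.exists_eq_succ_of_ne_zero (Fintype.card_ne_zero (α := ι))
  rw [cube_eq_pi]
  refine (volume_pi_inter_abs_dotProduct_sub_lt_le _ hz q _).trans_eq ?_
  simp only [Real.volume_Ioo, add_sub_sub_cancel, add_halves, prod_const,
    card_erase_of_mem (mem_univ i), card_univ]
  rw [← ENNReal.ofReal_pow hr, ← ENNReal.ofReal_mul (by positivity), hn, Nat.succ_sub_one,
    pow_succ]
  congr 1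
  field_simp
  ring

theorem ofReal_le_volume_cube_diff_inter [Fintype ι] [DecidableEq ι] (hr : 0 ≤ r)
    {ω : Set (ι → ℝ)} (hω : volume ω ≤ ENNReal.ofReal (r ^ Fintype.card ι / 4)) {z : ι → ℝ}
    {i : ι} (hz : z i ≠ 0) (q : ℝ) :
    ENNReal.ofReal (r ^ Fintype.card ι / 4) ≤
      volume ((cube c r \ ω) ∩ {x | r * |z i| / 4 ≤ |z ⬝ᵥ x - q|}) := by
  set S := {x | |z ⬝ᵥ x - q| < r * |z i| / 4}
  set G := (cube c r \ ω) ∩ {x | r * |z i| / 4 ≤ |z ⬝ᵥ x - q|}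
  have hcover : cube c r ⊆ ω ∪ (cube c r ∩ S) ∪ G := by
    intro x hx
    by_cases hxω : x ∈ ω
    · exact Or.inl (Or.inl hxω)
    by_cases hxS : x ∈ S
    · exact Or.inl (Or.inr ⟨hx, hxS⟩)
    · exact Or.inr ⟨⟨hx, hxω⟩, by simpa [S] using hxS⟩
  have key : ENNReal.ofReal (r ^ Fintype.card ι / 4) + ENNReal.ofReal (r ^ Fintype.card ι / 2) +
      ENNReal.ofReal (r ^ Fintype.card ι / 4) ≤
      ENNReal.ofReal (r ^ Fintype.card ι / 4) + ENNReal.ofReal (r ^ Fintype.card ι / 2) +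
        volume G :=
    calc _ = volume (cube c r) := by
          rw [volume_cube hr, ← ENNReal.ofReal_add (by positivity) (by positivity),
            ← ENNReal.ofReal_add (by positivity) (by positivity)]
          ring_nf
      _ ≤ volume ω + volume (cube c r ∩ S) + volume G :=
          (measure_mono hcover).trans <|
            (measure_union_le _ _).trans (add_le_add_left (measure_union_le _ _) _)
      _ ≤ _ := by
          gcongr
          exact volume_cube_inter_abs_dotProduct_sub_lt_le hr hz q
  exact ENNReal.le_of_add_le_add_left (by finiteness) key

theorem sum_sq_le_mul_setIntegral_cube_diff [Fintype ι] [Nonempty ι] (hr : 0 < r)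
    {ω : Set (ι → ℝ)} (hω : volume ω ≤ ENNReal.ofReal (r ^ Fintype.card ι / 4)) (z : ι → ℝ)
    (q : ℝ) :
    r ^ 2 * ∑ i, z i ^ 2 ≤
      (64 * Fintype.card ι / r ^ Fintype.card ι) * ∫ x in cube c r \ ω, (z ⬝ᵥ x - q) ^ 2 := by
  classical
  have hcont : Continuous fun x => z ⬝ᵥ x - q := by fun_prop
  obtain ⟨i, hi⟩ := exists_sum_sq_le_card_mul_sq z
  rcases eq_or_ne (z i) 0 with hzi | hzi
  · have hz : ∑ k, z k ^ 2 ≤ 0 := by simpa [hzi] using hi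
    have hint : 0 ≤ ∫ x in cube c r \ ω, (z ⬝ᵥ x - q) ^ 2 := integral_nonneg fun x => sq_nonneg _
    exact (mul_nonpos_of_nonneg_of_nonpos (sq_nonneg r) hz).trans (by positivity)
  set t := r * |z i| / 4
  set G := (cube c r \ ω) ∩ {x | t ≤ |z ⬝ᵥ x - q|}
  have hG : r ^ Fintype.card ι / 4 ≤ volume.real G := by
    have hfin : volume G ≠ ⊤ :=
      ((measure_mono (inter_subset_left.trans sdiff_subset)).trans_lt
        (by rw [volume_cube hr.le]; exact ENNReal.ofReal_lt_top)).ne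
    have h := ENNReal.toReal_mono hfin (ofReal_le_volume_cube_diff_inter hr.le hω hzi q)
    rw [ENNReal.toReal_ofReal (by positivity)] at h
    exact h
  have hcheb : t ^ 2 * volume.real G ≤ ∫ x in cube c r \ ω, (z ⬝ᵥ x - q) ^ 2 :=
    mul_measureReal_inter_le_setIntegral_sq hcont.measurable
      ((hcont.pow 2).integrableOn_cube.mono_set sdiff_subset) (by positivity)
  calc r ^ 2 * ∑ k, z k ^ 2 ≤ r ^ 2 * (Fintype.card ι * z i ^ 2) := by gcongr
    _ = 64 * Fintype.card ι / r ^ Fintype.card ι * (t ^ 2 * (r ^ Fintype.card ι / 4)) := by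
      simp only [t, div_pow, mul_pow, sq_abs]
      field_simp
      norm_num
    _ ≤ 64 * Fintype.card ι / r ^ Fintype.card ι * (t ^ 2 * volume.real G) := by gcongr
    _ ≤ _ := by gcongr

end

theorem stmt_8 :
    ∃ c : ℝ, 0 < c ∧
      ∀ (xstar : Fin 3 → ℝ) (r : ℝ), 0 < r →
        ∀ ω : Set (Fin 3 → ℝ), MeasurableSet ω →
          ω ⊆ {x | ∀ i, x i ∈ Ioo (xstar i - r / 2) (xstar i + r / 2)} →
          volume ω ≤ ENNReal.ofReal (r ^ 3 / 4) →
          ∀ z : Fin 3 → ℝ, ∀ q : ℝ,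
            r ^ 2 * (∑ i, (z i) ^ 2) ≤
              (c / r ^ 3) *
                ∫ x in {x | ∀ i, x i ∈ Ioo (xstar i - r / 2) (xstar i + r / 2)} \ ω,
                  ((∑ i, z i * x i) - q) ^ 2 := by
  refine ⟨192, by norm_num, fun xstar r hr ω _ _ hω z q => ?_⟩
  have h := sum_sq_le_mul_setIntegral_cube_diff (c := xstar) hr hω z q
  rw [Fintype.card_fin] at h
  norm_num at h
  exact h
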